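/- For the univariate symmetric quadratic polynomial p = a_0 + a_1(x + x*) + a_2(x^2 + (x*)^2) + a_3 x x* + a_4 x* x in R<x,x*>, the following are equivalent: (a) p is a sum of two squares; (b) p is a sum of squares; (c) there exists lambda in R with the 3x3 matrix [[a_0, lambda, a_1 - lambda],[lambda, a_3, a_2],[a_1 - lambda, a_2, a_4]] positive semidefinite; (d) p(X) is positive semidefinite for every real square matrix X of every size; (e) p(X) is positive semidefinite for every real 2x2 matrix X; (f) -a_1^2 + a_0(2a_2 + a_3 + a_4) >= 0, a_0 >= 0, and the 2x2 matrix [[a_3, a_2],[a_2, a_4]] is positive semidefinite. -/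

import Mathlib

/-
Expand in the monomials `1, x*, x`: the hermitian square of `α + β x* + γ x` has Gram matrix
`(α, β, γ)ᵀ (α, β, γ)`, so two such squares give a Gram matrix of `p` of the shape in (c), and a
sum of squares evaluates to `∑ Qᵢᵀ Qᵢ ⪰ 0`. At `X = [[u, v], [w, 0]]` the `(0,0)` entry of `p(X)`
is `a₀ + 2a₁u + Du² + b(v, w)`, where `D = 2a₂ + a₃ + a₄` and `b` is the quadratic form of
`B = [[a₃, a₂], [a₂, a₄]]`; letting `u` vary and scaling `(v, w)` gives (f).
Conversely, under (f) with `D > 0`, the identity `D·b(t) = ℓ(t)² + det B·(t₁ - t₂)²` for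
`ℓ(t) = (a₃ + a₂)t₁ + (a₂ + a₄)t₂` yields `p = q₁*q₁ + q₂*q₂` with
`q₁ = D^(-1/2) (a₁ + (a₃ + a₂)x* + (a₂ + a₄)x)` and `q₂ = √(a₀ - a₁²/D) + √(det B/D) (x* - x)`;
when `D = 0`, positivity of `B` forces `a₁ = 0` and `a₃ = a₄ = -a₂`, so
`p = a₀ + a₃ (x* - x)*(x* - x)`.
-/

open scoped BigOperators

noncomputable section

/-- The free real *-algebra on `g` variables `x₁,…,x_g` and their formal adjoints
`x₁*,…,x_g*`, modeled as the monoid algebra of the free monoid on `2g` letters,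
where `Sum.inl i` is `xᵢ` and `Sum.inr i` is `xᵢ*`. -/
abbrev FreeStarAlg (g : ℕ) := MonoidAlgebra ℝ (FreeMonoid (Fin g ⊕ Fin g))

namespace FreeStarAlg

variable {g : ℕ}

/-- The involution on words: reverse the word and star each letter. -/
def starWord (w : FreeMonoid (Fin g ⊕ Fin g)) : FreeMonoid (Fin g ⊕ Fin g) :=
  FreeMonoid.ofList (((FreeMonoid.toList w).map Sum.swap).reverse)

/-- The involution `p ↦ p*` on the free *-algebra. -/
def starP (p : FreeStarAlg g) : FreeStarAlg g :=
  MonoidAlgebra.ofCoeff (Finsupp.mapDomain starWord p.coeff)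

/-- The monomial corresponding to a word. -/
def mono (w : FreeMonoid (Fin g ⊕ Fin g)) : FreeStarAlg g :=
  MonoidAlgebra.single w 1

/-- Degree of a noncommutative polynomial. -/
def deg (p : FreeStarAlg g) : ℕ :=
  p.coeff.support.sup fun w => (FreeMonoid.toList w).length

/-- `p` is homogeneous of degree `d`: every word appearing in `p` has length `d`. -/
def IsHom (d : ℕ) (p : FreeStarAlg g) : Prop :=
  ∀ w ∈ p.coeff.support, (FreeMonoid.toList w).length = d

/-- `p` is a (finite) sum of hermitian squares `qᵢ* qᵢ`. -/
def IsSOS (p : FreeStarAlg g) : Prop :=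
  ∃ (k : ℕ) (q : Fin k → FreeStarAlg g), p = ∑ i, starP (q i) * q i

/-- Membership in `I + I*`. -/
def MemIplusIstar (I : Submodule (FreeStarAlg g) (FreeStarAlg g)) (p : FreeStarAlg g) : Prop :=
  ∃ u ∈ I, ∃ v ∈ I, p = u + starP v

/-- A left ideal `I` is real if `∑ aᵢ* aᵢ ∈ I + I*` forces every `aᵢ ∈ I`. -/
def IsRealIdeal (I : Submodule (FreeStarAlg g) (FreeStarAlg g)) : Prop :=
  ∀ (r : ℕ) (a : Fin r → FreeStarAlg g),
    MemIplusIstar I (∑ i, starP (a i) * a i) → ∀ i, a i ∈ I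

/-- The left ideal generated by a set `S`. -/
def leftIdealGen (S : Set (FreeStarAlg g)) : Submodule (FreeStarAlg g) (FreeStarAlg g) :=
  Submodule.span (FreeStarAlg g) S

/-- `p` is irreducible: it cannot be written as a product of two polynomials of
strictly smaller degree. -/
def Irred (p : FreeStarAlg g) : Prop :=
  ¬ ∃ q r : FreeStarAlg g, p = q * r ∧ deg q < deg p ∧ deg r < deg p

/-- `p` is analytic: it contains no starred variables. -/
def IsAnalytic (p : FreeStarAlg g) : Prop :=
  ∀ w ∈ p.coeff.support, ∀ l ∈ FreeMonoid.toList w, l.isLeft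

end FreeStarAlg

open FreeStarAlg Matrix

/-- The single variable `x` in `ℝ⟨x,x*⟩`. -/
def Xvar : FreeStarAlg 1 := mono (FreeMonoid.of (Sum.inl 0))

/-- The starred variable `x*` in `ℝ⟨x,x*⟩`. -/
def Xstar : FreeStarAlg 1 := mono (FreeMonoid.of (Sum.inr 0))

/-- Evaluation of a word at a matrix `X`, substituting `Xᵀ` for starred letters. -/
def evalWord {n : ℕ} (X : Matrix (Fin n) (Fin n) ℝ) (w : FreeMonoid (Fin 1 ⊕ Fin 1)) :
    Matrix (Fin n) (Fin n) ℝ :=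
  ((FreeMonoid.toList w).map (Sum.elim (fun _ => X) (fun _ => Xᵀ))).prod

/-- Evaluation of a univariate noncommutative polynomial at a matrix. -/
def evalP {n : ℕ} (X : Matrix (Fin n) (Fin n) ℝ) (p : FreeStarAlg 1) :
    Matrix (Fin n) (Fin n) ℝ :=
  p.coeff.sum fun w c => c • evalWord X w

namespace FreeStarAlg

variable {g : ℕ}

@[simp] lemma starP_add (p q : FreeStarAlg g) : starP (p + q) = starP p + starP q := by
  simp [starP, Finsupp.mapDomain_add]

@[simp] lemma starP_smul (c : ℝ) (p : FreeStarAlg g) : starP (c • p) = c • starP p := by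
  simp [starP, Finsupp.mapDomain_smul]

@[simp] lemma starP_one : starP (1 : FreeStarAlg g) = 1 := by
  simp [starP, MonoidAlgebra.one_def, Finsupp.mapDomain_single, starWord]

end FreeStarAlg

@[simp] lemma starP_Xvar : starP Xvar = Xstar := by
  simp [starP, Xvar, Xstar, mono, Finsupp.mapDomain_single, starWord]

@[simp] lemma starP_Xstar : starP Xstar = Xvar := by
  simp [starP, Xvar, Xstar, mono, Finsupp.mapDomain_single, starWord]

def symQuad (a0 a1 a2 a3 a4 : ℝ) : FreeStarAlg 1 :=
  a0 • 1 + a1 • (Xvar + Xstar) + a2 • (Xvar ^ 2 + Xstar ^ 2) + a3 • (Xvar * Xstar) +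
    a4 • (Xstar * Xvar)

lemma symQuad_add (a0 a1 a2 a3 a4 b0 b1 b2 b3 b4 : ℝ) :
    symQuad a0 a1 a2 a3 a4 + symQuad b0 b1 b2 b3 b4 =
      symQuad (a0 + b0) (a1 + b1) (a2 + b2) (a3 + b3) (a4 + b4) := by
  simp only [symQuad, add_smul]
  abel

lemma starP_mul_self_affine (α β γ : ℝ) :
    starP (α • 1 + β • Xstar + γ • Xvar) * (α • 1 + β • Xstar + γ • Xvar) =
      symQuad (α ^ 2) (α * (β + γ)) (β * γ) (β ^ 2) (γ ^ 2) := by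
  simp only [starP_add, starP_smul, starP_one, starP_Xvar, starP_Xstar, symQuad, add_mul,
    mul_add, smul_mul_smul, one_mul, mul_one, pow_two]
  module

def evalAlgHom {n : ℕ} (X : Matrix (Fin n) (Fin n) ℝ) :
    FreeStarAlg 1 →ₐ[ℝ] Matrix (Fin n) (Fin n) ℝ :=
  MonoidAlgebra.lift ℝ _ _ (FreeMonoid.lift (Sum.elim (fun _ => X) (fun _ => Xᵀ)))

section Eval

variable {n : ℕ} (X : Matrix (Fin n) (Fin n) ℝ)

lemma evalWord_eq_lift (w : FreeMonoid (Fin 1 ⊕ Fin 1)) :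
    evalWord X w = FreeMonoid.lift (Sum.elim (fun _ => X) (fun _ => Xᵀ)) w :=
  (FreeMonoid.lift_apply _ _).symm

lemma evalP_eq_evalAlgHom (p : FreeStarAlg 1) : evalP X p = evalAlgHom X p := by
  simp [evalAlgHom, MonoidAlgebra.lift_apply, evalP, evalWord_eq_lift]

@[simp] lemma evalAlgHom_Xvar : evalAlgHom X Xvar = X := by
  simp [evalAlgHom, Xvar, mono, MonoidAlgebra.lift_single]

@[simp] lemma evalAlgHom_Xstar : evalAlgHom X Xstar = Xᵀ := by
  simp [evalAlgHom, Xstar, mono, MonoidAlgebra.lift_single]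

lemma evalWord_starWord (w : FreeMonoid (Fin 1 ⊕ Fin 1)) :
    evalWord X (starWord w) = (evalWord X w)ᵀ := by
  rw [evalWord, starWord, FreeMonoid.toList_ofList, evalWord, transpose_list_prod,
    List.map_reverse, List.map_map, List.map_map]
  congr 3
  funext l
  cases l <;> simp

lemma evalP_starP (p : FreeStarAlg 1) : evalP X (starP p) = (evalP X p)ᵀ := by
  rw [evalP, starP, MonoidAlgebra.coeff_ofCoeff,
    Finsupp.sum_mapDomain_index (by simp) (fun _ _ _ => add_smul _ _ _), evalP, Finsupp.sum,
    Finsupp.sum, transpose_sum]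
  simp only [evalWord_starWord, transpose_smul]

lemma evalP_symQuad (a0 a1 a2 a3 a4 : ℝ) :
    evalP X (symQuad a0 a1 a2 a3 a4) = a0 • 1 + a1 • (X + Xᵀ) + a2 • (X ^ 2 + Xᵀ ^ 2) +
      a3 • (X * Xᵀ) + a4 • (Xᵀ * X) := by
  simp [evalP_eq_evalAlgHom, symQuad]

lemma posSemidef_evalP_of_isSOS {p : FreeStarAlg 1} (hp : IsSOS p) : (evalP X p).PosSemidef := by
  obtain ⟨k, q, rfl⟩ := hp
  rw [evalP_eq_evalAlgHom, map_sum]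
  refine posSemidef_sum _ fun i _ => ?_
  rw [map_mul, ← evalP_eq_evalAlgHom, ← evalP_eq_evalAlgHom, evalP_starP,
    ← conjTranspose_eq_transpose_of_trivial]
  exact posSemidef_conjTranspose_mul_self _

end Eval

lemma evalP_symQuad_zero_zero (a0 a1 a2 a3 a4 u v w : ℝ) :
    evalP !![u, v; w, 0] (symQuad a0 a1 a2 a3 a4) 0 0 =
      a0 + 2 * a1 * u + (2 * a2 + a3 + a4) * u ^ 2 +
        (a3 * v ^ 2 + 2 * a2 * v * w + a4 * w ^ 2) := by
  simp [evalP_symQuad, pow_two, mul_apply, vecMul, dotProduct, Fin.sum_univ_two]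
  ring

lemma sq_le_mul_of_forall_quadratic_nonneg {a b c : ℝ}
    (h : ∀ u : ℝ, 0 ≤ c + 2 * b * u + a * u ^ 2) : b ^ 2 ≤ c * a := by
  have := discrim_le_zero (a := a) (b := 2 * b) (c := c) fun u => by linarith [h u]
  rw [discrim] at this
  linarith

lemma nonneg_of_forall_add_mul_sq_nonneg {a b : ℝ} (h : ∀ t : ℝ, 0 ≤ a + b * t ^ 2) : 0 ≤ b := by
  have hab := sq_le_mul_of_forall_quadratic_nonneg (b := 0) fun t => by simpa using h t
  nlinarith [h 0, h 1]

lemma posSemidef_fin_two_iff_forall {a b c : ℝ} :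
    (!![a, b; b, c] : Matrix (Fin 2) (Fin 2) ℝ).PosSemidef ↔
      ∀ v w : ℝ, 0 ≤ a * v ^ 2 + 2 * b * v * w + c * w ^ 2 := by
  have hform : ∀ x : Fin 2 → ℝ, star x ⬝ᵥ (!![a, b; b, c] *ᵥ x) =
      a * x 0 ^ 2 + 2 * b * x 0 * x 1 + c * x 1 ^ 2 := fun x => by
    simp [dotProduct, mulVec, Fin.sum_univ_two]
    ring
  have hherm : (!![a, b; b, c] : Matrix (Fin 2) (Fin 2) ℝ).IsHermitian := by
    ext i j
    fin_cases i <;> fin_cases j <;> rfl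
  simp only [posSemidef_iff_dotProduct_mulVec, hform, hherm, true_and]
  exact ⟨fun h v w => by simpa using h ![v, w], fun h x => h (x 0) (x 1)⟩

lemma posSemidef_fin_two_iff {a b c : ℝ} :
    (!![a, b; b, c] : Matrix (Fin 2) (Fin 2) ℝ).PosSemidef ↔ 0 ≤ a ∧ 0 ≤ c ∧ b ^ 2 ≤ a * c := by
  rw [posSemidef_fin_two_iff_forall]
  refine ⟨fun h => ⟨by simpa using h 1 0, by simpa using h 0 1, ?_⟩, ?_⟩
  · have := sq_le_mul_of_forall_quadratic_nonneg (a := a) (b := b) (c := c)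
      fun v => (h v 1).trans_eq (by ring)
    linarith
  · rintro ⟨ha, hc, hb⟩ v w
    rcases ha.eq_or_lt with rfl | ha
    · obtain rfl : b = 0 := by nlinarith
      nlinarith
    · refine (mul_nonneg_iff_of_pos_left ha).1 ?_
      nlinarith [sq_nonneg (a * v + b * w), mul_nonneg (sub_nonneg.2 hb) (sq_nonneg w)]

lemma exists_coeffs_sum_two_sq {a0 a1 a2 a3 a4 : ℝ} (h1 : a1 ^ 2 ≤ a0 * (2 * a2 + a3 + a4))
    (h0 : 0 ≤ a0) (hB : (!![a3, a2; a2, a4] : Matrix (Fin 2) (Fin 2) ℝ).PosSemidef) :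
    ∃ α₁ β₁ γ₁ α₂ β₂ γ₂ : ℝ, a0 = α₁ ^ 2 + α₂ ^ 2 ∧ a1 = α₁ * (β₁ + γ₁) + α₂ * (β₂ + γ₂) ∧
      a2 = β₁ * γ₁ + β₂ * γ₂ ∧ a3 = β₁ ^ 2 + β₂ ^ 2 ∧ a4 = γ₁ ^ 2 + γ₂ ^ 2 := by
  obtain ⟨h3, h4, hdet⟩ := posSemidef_fin_two_iff.1 hB
  have hD : 0 ≤ 2 * a2 + a3 + a4 := by
    linarith [posSemidef_fin_two_iff_forall.1 hB 1 1]
  rcases hD.eq_or_lt with hD | hD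
  · have ha1 : a1 = 0 := by nlinarith
    have ha4 : a4 = a3 := by nlinarith
    have ha2 : a2 = -a3 := by linarith
    refine ⟨0, 0, 0, √a0, √a3, -√a3, ?_, ?_, ?_, ?_, ?_⟩ <;> simp [h0, h3, ha1, ha2, ha4]
  · set D := 2 * a2 + a3 + a4
    have hc : 0 ≤ a0 - a1 ^ 2 / D := by
      rw [sub_nonneg, div_le_iff₀ hD]
      linarith
    have he : 0 ≤ (a3 * a4 - a2 ^ 2) / D := div_nonneg (by linarith) hD.le
    have hsD : √D ^ 2 = D := Real.sq_sqrt hD.le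
    have hsD' : √D ≠ 0 := (Real.sqrt_pos.2 hD).ne'
    refine ⟨a1 / √D, (a3 + a2) / √D, (a2 + a4) / √D, √(a0 - a1 ^ 2 / D),
      √((a3 * a4 - a2 ^ 2) / D), -√((a3 * a4 - a2 ^ 2) / D), ?_, ?_, ?_, ?_, ?_⟩
    · rw [div_pow, hsD, Real.sq_sqrt hc]
      ring
    · field_simp
      rw [hsD]
      ring
    · rw [div_mul_div_comm, ← pow_two, hsD, mul_neg, ← pow_two, Real.sq_sqrt he]
      field_simp
      ring
    · rw [div_pow, hsD, Real.sq_sqrt he]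
      field_simp
      ring
    · rw [div_pow, hsD, neg_sq, Real.sq_sqrt he]
      field_simp
      ring

lemma coeff_conditions_of_forall_posSemidef_evalP {a0 a1 a2 a3 a4 : ℝ}
    (h : ∀ X : Matrix (Fin 2) (Fin 2) ℝ, (evalP X (symQuad a0 a1 a2 a3 a4)).PosSemidef) :
    a1 ^ 2 ≤ a0 * (2 * a2 + a3 + a4) ∧ 0 ≤ a0 ∧
      (!![a3, a2; a2, a4] : Matrix (Fin 2) (Fin 2) ℝ).PosSemidef := by
  have hentry (u v w : ℝ) :
      0 ≤ a0 + 2 * a1 * u + (2 * a2 + a3 + a4) * u ^ 2 +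
        (a3 * v ^ 2 + 2 * a2 * v * w + a4 * w ^ 2) := by
    simpa only [evalP_symQuad_zero_zero] using (h !![u, v; w, 0]).diag_nonneg (i := 0)
  refine ⟨sq_le_mul_of_forall_quadratic_nonneg fun u => by simpa using hentry u 0 0,
    by simpa using hentry 0 0 0, posSemidef_fin_two_iff_forall.2 fun v w => ?_⟩
  exact nonneg_of_forall_add_mul_sq_nonneg (a := a0) fun t =>
    (hentry 0 (t * v) (t * w)).trans_eq (by ring)

lemma exists_sum_two_sq_symQuad {a0 a1 a2 a3 a4 : ℝ} (h1 : a1 ^ 2 ≤ a0 * (2 * a2 + a3 + a4))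
    (h0 : 0 ≤ a0) (hB : (!![a3, a2; a2, a4] : Matrix (Fin 2) (Fin 2) ℝ).PosSemidef) :
    ∃ q₁ q₂ : FreeStarAlg 1, symQuad a0 a1 a2 a3 a4 = starP q₁ * q₁ + starP q₂ * q₂ := by
  obtain ⟨α₁, β₁, γ₁, α₂, β₂, γ₂, rfl, rfl, rfl, rfl, rfl⟩ := exists_coeffs_sum_two_sq h1 h0 hB
  refine ⟨α₁ • 1 + β₁ • Xstar + γ₁ • Xvar, α₂ • 1 + β₂ • Xstar + γ₂ • Xvar, ?_⟩
  rw [starP_mul_self_affine, starP_mul_self_affine, symQuad_add]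

lemma exists_gram_posSemidef {a0 a1 a2 a3 a4 : ℝ} (h1 : a1 ^ 2 ≤ a0 * (2 * a2 + a3 + a4))
    (h0 : 0 ≤ a0) (hB : (!![a3, a2; a2, a4] : Matrix (Fin 2) (Fin 2) ℝ).PosSemidef) :
    ∃ lam : ℝ, (!![a0, lam, a1 - lam; lam, a3, a2; a1 - lam, a2, a4] :
      Matrix (Fin 3) (Fin 3) ℝ).PosSemidef := by
  obtain ⟨α₁, β₁, γ₁, α₂, β₂, γ₂, rfl, rfl, rfl, rfl, rfl⟩ := exists_coeffs_sum_two_sq h1 h0 hB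
  refine ⟨α₁ * β₁ + α₂ * β₂, ?_⟩
  convert posSemidef_conjTranspose_mul_self !![α₁, β₁, γ₁; α₂, β₂, γ₂] using 1
  ext i j
  fin_cases i <;> fin_cases j <;> simp [mul_apply, Fin.sum_univ_two] <;> ring

lemma coeff_conditions_of_gram_posSemidef {a0 a1 a2 a3 a4 lam : ℝ}
    (hG : (!![a0, lam, a1 - lam; lam, a3, a2; a1 - lam, a2, a4] :
      Matrix (Fin 3) (Fin 3) ℝ).PosSemidef) :
    a1 ^ 2 ≤ a0 * (2 * a2 + a3 + a4) ∧ 0 ≤ a0 ∧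
      (!![a3, a2; a2, a4] : Matrix (Fin 2) (Fin 2) ℝ).PosSemidef := by
  have hB : (!![a3, a2; a2, a4] : Matrix (Fin 2) (Fin 2) ℝ).PosSemidef := by
    convert hG.submatrix Fin.succ using 1
    ext i j
    fin_cases i <;> fin_cases j <;> rfl
  -- compress the Gram matrix along `x* + x`, the direction in which `λ` cancels
  have hA : (!![a0, a1; a1, 2 * a2 + a3 + a4] : Matrix (Fin 2) (Fin 2) ℝ).PosSemidef := by
    convert hG.conjTranspose_mul_mul_same !![1, 0; 0, 1; 0, 1] using 1
    ext i j
    fin_cases i <;> fin_cases j <;> simp [mul_apply, Fin.sum_univ_succ]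
    ring
  obtain ⟨h0, -, h1⟩ := posSemidef_fin_two_iff.1 hA
  exact ⟨h1, h0, hB⟩

/-- For the symmetric univariate quadratic
`p = a₀ + a₁(x + x*) + a₂(x² + (x*)²) + a₃ x x* + a₄ x* x`, six conditions
(sum of two squares; sum of squares; Gram LMI feasibility; matrix positivity at all
sizes; matrix positivity at size 2; the explicit inequalities) are equivalent. -/
theorem stmt16 (a0 a1 a2 a3 a4 : ℝ) (p : FreeStarAlg 1)
    (hp : p = a0 • (1 : FreeStarAlg 1) + a1 • (Xvar + Xstar) +
      a2 • (Xvar ^ 2 + Xstar ^ 2) + a3 • (Xvar * Xstar) + a4 • (Xstar * Xvar)) :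
    List.TFAE [
      ∃ q1 q2 : FreeStarAlg 1, p = starP q1 * q1 + starP q2 * q2,
      IsSOS p,
      ∃ lam : ℝ,
        (!![a0, lam, a1 - lam; lam, a3, a2; a1 - lam, a2, a4] :
          Matrix (Fin 3) (Fin 3) ℝ).PosSemidef,
      ∀ (n : ℕ) (X : Matrix (Fin n) (Fin n) ℝ), (evalP X p).PosSemidef,
      ∀ X : Matrix (Fin 2) (Fin 2) ℝ, (evalP X p).PosSemidef,
      -a1 ^ 2 + a0 * (2 * a2 + a3 + a4) ≥ 0 ∧ a0 ≥ 0 ∧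
        (!![a3, a2; a2, a4] : Matrix (Fin 2) (Fin 2) ℝ).PosSemidef ] := by
  obtain rfl : p = symQuad a0 a1 a2 a3 a4 := hp
  tfae_have 1 → 2 := fun ⟨q₁, q₂, h⟩ => ⟨2, ![q₁, q₂], by simpa [Fin.sum_univ_two] using h⟩
  tfae_have 2 → 4 := fun h _ X => posSemidef_evalP_of_isSOS X h
  tfae_have 4 → 5 := fun h => h 2
  tfae_have 5 → 6 := fun h => by
    obtain ⟨h1, h0, hB⟩ := coeff_conditions_of_forall_posSemidef_evalP h
    exact ⟨by linarith, h0, hB⟩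
  tfae_have 6 → 1 := fun ⟨h1, h0, hB⟩ => exists_sum_two_sq_symQuad (by linarith) h0 hB
  tfae_have 6 → 3 := fun ⟨h1, h0, hB⟩ => exists_gram_posSemidef (by linarith) h0 hB
  tfae_have 3 → 6 := fun ⟨_, hG⟩ => by
    obtain ⟨h1, h0, hB⟩ := coeff_conditions_of_gram_posSemidef hG
    exact ⟨by linarith, h0, hB⟩
  tfae_finish
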